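/- arXiv:1710.10583 — 2 statements merged into one kernel-verified Lean document; each statement's English description precedes it below -/
import Mathlib

section
/- For α > 2 and A > 0, the integral over ℝ² of A/(A + |x|^α) dx equals π · A^{2/α} · Γ(1 + 2/α) · Γ(1 - 2/α), where |x| denotes the Euclidean norm. -/
/-!
In polar coordinates the integral of `A / (A + ‖x‖ ^ α)` over an `n`-dimensional space is
`n · vol(B₁) · ∫₀^∞ r^(n-1) A / (A + r^α) dr`. The substitutions `r = t^(1/α)` and `t = A u` turn
the radial integral into `A^(n/α) / α · ∫₀^∞ u^(s-1) / (1 + u) du` with `s = n/α < 1`, and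
`u = x / (1 - x)` identifies this with the Beta integral `B(s, 1 - s) = Γ(s) Γ(1 - s)`.
Finally `(n/α) Γ(n/α) = Γ(1 + n/α)`, and `vol(B₁) = π` in the plane.
-/

open Real MeasureTheory Set Metric

theorem integral_rpow_mul_one_sub_rpow {a b : ℝ} (ha : 0 < a) (hb : 0 < b) :
    ∫ x in (0 : ℝ)..1, x ^ (a - 1) * (1 - x) ^ (b - 1) = Gamma a * Gamma b / Gamma (a + b) := by
  apply Complex.ofReal_injective
  rw [← intervalIntegral.integral_ofReal]
  push_cast
  rw [← Complex.Gamma_ofReal, ← Complex.Gamma_ofReal, ← Complex.Gamma_ofReal, Complex.ofReal_add,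
    ← Complex.betaIntegral_eq_Gamma_mul_div _ _ (by simpa) (by simpa), Complex.betaIntegral]
  refine intervalIntegral.integral_congr fun x hx => ?_
  rw [uIcc_of_le zero_le_one] at hx
  push_cast [Complex.ofReal_cpow hx.1, Complex.ofReal_cpow (sub_nonneg.2 hx.2)]
  rfl

theorem integral_Ioi_rpow_div_one_add_rpow {a b : ℝ} (ha : 0 < a) (hb : 0 < b) :
    ∫ u in Ioi (0 : ℝ), u ^ (a - 1) / (1 + u) ^ (a + b) = Gamma a * Gamma b / Gamma (a + b) := by
  have hmono : StrictMonoOn (fun u : ℝ => u / (1 + u)) (Ioi 0) := by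
    intro x (hx : 0 < x) y (hy : 0 < y) hxy
    rw [div_lt_div_iff₀ (by positivity) (by positivity)]
    linarith
  have himage : (fun u : ℝ => u / (1 + u)) '' Ioi 0 = Ioo 0 1 := by
    ext x
    constructor
    · rintro ⟨u, hu : 0 < u, rfl⟩
      exact ⟨by positivity, (div_lt_one (by positivity)).2 (by linarith)⟩
    · rintro ⟨hx0, hx1⟩
      refine ⟨x / (1 - x), div_pos hx0 (sub_pos.2 hx1), ?_⟩
      field_simp
      ring
  have hderiv : ∀ u ∈ Ioi (0 : ℝ),
      HasDerivWithinAt (fun u : ℝ => u / (1 + u)) (1 / (1 + u) ^ 2) (Ioi 0) u := by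
    intro u (hu : 0 < u)
    have h1u : (1 : ℝ) + u ≠ 0 := by positivity
    have h : HasDerivAt (fun u : ℝ => u / (1 + u)) ((1 * (1 + u) - u * 1) / (1 + u) ^ 2) u :=
      (hasDerivAt_id' u).div ((hasDerivAt_id' u).const_add 1) h1u
    rw [show (1 : ℝ) / (1 + u) ^ 2 = (1 * (1 + u) - u * 1) / (1 + u) ^ 2 by ring]
    exact h.hasDerivWithinAt
  have hsubst := integral_image_eq_integral_abs_deriv_smul measurableSet_Ioi hderiv hmono.injOn
    (fun x => x ^ (a - 1) * (1 - x) ^ (b - 1))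
  rw [himage, ← integral_Ioc_eq_integral_Ioo, ← intervalIntegral.integral_of_le zero_le_one,
    integral_rpow_mul_one_sub_rpow ha hb] at hsubst
  rw [hsubst]
  refine setIntegral_congr_fun measurableSet_Ioi fun u (hu : 0 < u) => ?_
  have h1u : 0 < 1 + u := by positivity
  have hsub : 1 - u / (1 + u) = (1 + u)⁻¹ := by field_simp; ring
  have hsplit : (1 + u) ^ (a + b) = (1 + u) ^ (a - 1) * (1 + u) ^ (b - 1) * (1 + u) ^ 2 := by
    rw [← rpow_add h1u, ← rpow_two, ← rpow_add h1u]
    ring_nf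
  rw [smul_eq_mul, abs_of_pos (by positivity), hsub, div_rpow hu.le h1u.le, inv_rpow h1u.le,
    hsplit]
  field_simp

theorem integral_Ioi_rpow_div_add_rpow {a b c : ℝ} (ha : 0 < a) (hb : 0 < b) (hc : 0 < c) :
    ∫ u in Ioi (0 : ℝ), u ^ (a - 1) / (c + u) ^ (a + b) =
      c ^ (-b) * (Gamma a * Gamma b / Gamma (a + b)) := by
  have hscale := integral_comp_mul_left_Ioi (fun u : ℝ => u ^ (a - 1) / (c + u) ^ (a + b)) 0 hc
  rw [mul_zero, eq_inv_smul_iff₀ hc.ne'] at hscale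
  rw [← hscale, ← integral_Ioi_rpow_div_one_add_rpow ha hb, smul_eq_mul, ← integral_const_mul,
    ← integral_const_mul]
  refine setIntegral_congr_fun measurableSet_Ioi fun t (ht : 0 < t) => ?_
  have h1t : 0 < 1 + t := by positivity
  have hc_pow : c ^ (a + b) = c * c ^ (a - 1) * c ^ b := by
    rw [mul_assoc, ← rpow_add hc, ← rpow_one_add' hc.le (by linarith)]
    ring_nf
  rw [show c + c * t = c * (1 + t) by ring, mul_rpow hc.le ht.le, mul_rpow hc.le h1t.le, hc_pow,
    rpow_neg hc.le]
  field_simp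

theorem integral_Ioi_rpow_mul_div_add_rpow {p α c : ℝ} (hp : 0 < p) (hpα : p < α) (hc : 0 < c) :
    ∫ r in Ioi (0 : ℝ), r ^ (p - 1) * (c / (c + r ^ α)) =
      c ^ (p / α) * Gamma (p / α) * Gamma (1 - p / α) / α := by
  have hα : 0 < α := hp.trans hpα
  have hs0 : 0 < p / α := div_pos hp hα
  have hs1 : 0 < 1 - p / α := sub_pos.2 ((div_lt_one hα).2 hpα)
  rw [← integral_comp_rpow_Ioi_of_pos (inv_pos.2 hα)]
  have hpoint : ∀ x ∈ Ioi (0 : ℝ), (α⁻¹ * x ^ (α⁻¹ - 1)) • ((x ^ α⁻¹) ^ (p - 1) *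
      (c / (c + (x ^ α⁻¹) ^ α))) = c / α * (x ^ (p / α - 1) / (c + x) ^ (p / α + (1 - p / α))) := by
    intro x (hx : 0 < x)
    rw [← rpow_mul hx.le, ← rpow_mul hx.le, inv_mul_cancel₀ hα.ne', rpow_one,
      add_sub_cancel, rpow_one, smul_eq_mul, div_eq_mul_inv p α,
      show p * α⁻¹ - 1 = (α⁻¹ - 1) + α⁻¹ * (p - 1) by ring, rpow_add hx]
    ring
  rw [setIntegral_congr_fun measurableSet_Ioi hpoint, integral_const_mul,
    integral_Ioi_rpow_div_add_rpow hs0 hs1 hc, add_sub_cancel, Gamma_one, div_one,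
    neg_sub, rpow_sub_one hc.ne']
  field_simp

theorem integral_div_add_norm_rpow {E : Type*} [NormedAddCommGroup E] [NormedSpace ℝ E]
    [Nontrivial E] [FiniteDimensional ℝ E] [MeasurableSpace E] [BorelSpace E] (μ : Measure E)
    [μ.IsAddHaarMeasure] {α c : ℝ} (hα : (Module.finrank ℝ E : ℝ) < α) (hc : 0 < c) :
    ∫ x, c / (c + ‖x‖ ^ α) ∂μ = μ.real (ball 0 1) * c ^ (Module.finrank ℝ E / α) *
      Gamma (1 + Module.finrank ℝ E / α) * Gamma (1 - Module.finrank ℝ E / α) := by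
  have hn0 : 0 < Module.finrank ℝ E := Module.finrank_pos
  have hpow : ∀ r ∈ Ioi (0 : ℝ), r ^ (Module.finrank ℝ E - 1) • (c / (c + r ^ α)) =
      r ^ ((Module.finrank ℝ E : ℝ) - 1) * (c / (c + r ^ α)) := by
    intro r _
    rw [smul_eq_mul, ← Nat.cast_pred hn0, rpow_natCast]
  have hα0 : 0 < α := (Nat.cast_pos.2 hn0).trans hα
  rw [integral_fun_norm_addHaar μ (fun r => c / (c + r ^ α)), setIntegral_congr_fun
    measurableSet_Ioi hpow, integral_Ioi_rpow_mul_div_add_rpow (Nat.cast_pos.2 hn0) hα hc,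
    add_comm 1, Gamma_add_one (by positivity), nsmul_eq_mul, smul_eq_mul]
  field_simp

/-- For `α > 2` and `A > 0`, the integral over `ℝ²` of `A / (A + |x|^α)` equals
`π · A^(2/α) · Γ(1 + 2/α) · Γ(1 - 2/α)`. -/
theorem planar_integral_identity (α A : ℝ) (hα : 2 < α) (hA : 0 < A) :
    ∫ x : EuclideanSpace ℝ (Fin 2), A / (A + ‖x‖ ^ α) =
      π * A ^ (2 / α) * Real.Gamma (1 + 2 / α) * Real.Gamma (1 - 2 / α) := by
  have hdim : Module.finrank ℝ (EuclideanSpace ℝ (Fin 2)) = 2 := finrank_euclideanSpace_fin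
  have hball : volume.real (ball (0 : EuclideanSpace ℝ (Fin 2)) 1) = π := by
    simp [measureReal_def, pi_nonneg]
  have h := integral_div_add_norm_rpow volume (by rwa [hdim, Nat.cast_ofNat]) hA
  rwa [hball, hdim, Nat.cast_ofNat] at h
end

section
/- Let f(L) = (α/(2|L|)) log₂( ln(1/(1-ε)) / (K₁ Σ_{l∈L}|D_l|²) ) over a nonempty finite set 𝓛 of paths with hop counts 1 ≤ |L| ≤ N-1, restricted to paths satisfying K₁ Σ_{l∈L}|D_l|² < ln(1/(1-ε)). Then max_{L} f(L) = max_{1 ≤ v ≤ N-1} f(L̃_v), where L̃_v is a minimizer of Σ_{l∈L}|D_l|² over paths with |L| ≤ v satisfying the constraint (if any exist). -/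
open Real Finset

/-- Theorem 2 (decomposition of secure routing): let `𝓛` be the finite set of
source-destination paths in a network of `N` nodes, with hop counts
`1 ≤ |L| ≤ N-1` and positive total squared distances `W L = Σ_{l∈L}|D_l|²`.
Restrict attention to the feasible paths `F = {L ∈ 𝓛 | K₁ W L < ln(1/(1-ε))}`
and let `L̃ v` be, for each hop budget `v` admitting a feasible path of at most
`v` hops, a minimizer of `W` over such paths.  Then the maximum of the secrecy
rate `f L = (α/(2|L|)) log₂( ln(1/(1-ε)) / (K₁ W L) )` over `F` is attained as
the maximum over `v ∈ {1,…,N-1}` of `f (L̃ v)`. -/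
theorem routing_decomposition {P : Type*} (𝓛 F : Finset P) (N : ℕ)
    (hop : P → ℕ) (hhop : ∀ L ∈ 𝓛, 1 ≤ hop L ∧ hop L ≤ N - 1)
    (W : P → ℝ) (hW : ∀ L ∈ 𝓛, 0 < W L)
    (K₁ α ε : ℝ) (hK : 0 < K₁) (hα : 0 < α) (hε0 : 0 < ε) (hε1 : ε < 1)
    (hF : ∀ L, L ∈ F ↔ L ∈ 𝓛 ∧ K₁ * W L < Real.log (1 / (1 - ε)))
    (hFne : F.Nonempty)
    (Lt : ℕ → P)
    (hLt : ∀ v : ℕ, (∃ L ∈ F, hop L ≤ v) →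
      Lt v ∈ F ∧ hop (Lt v) ≤ v ∧ ∀ L ∈ F, hop L ≤ v → W (Lt v) ≤ W L) :
    ∃ v ∈ Finset.Icc 1 (N - 1),
      (∃ L ∈ F, hop L ≤ v) ∧
      (∀ L ∈ F,
        α / (2 * hop L) * Real.logb 2 (Real.log (1 / (1 - ε)) / (K₁ * W L)) ≤
        α / (2 * hop (Lt v)) *
          Real.logb 2 (Real.log (1 / (1 - ε)) / (K₁ * W (Lt v)))) ∧
      (∀ v' ∈ Finset.Icc 1 (N - 1), (∃ L ∈ F, hop L ≤ v') →
        α / (2 * hop (Lt v')) *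
            Real.logb 2 (Real.log (1 / (1 - ε)) / (K₁ * W (Lt v'))) ≤
        α / (2 * hop (Lt v)) *
            Real.logb 2 (Real.log (1 / (1 - ε)) / (K₁ * W (Lt v)))) := by
  classical
  set C : ℝ := Real.log (1 / (1 - ε)) with hC
  have h1ε : 0 < 1 - ε := by linarith
  have hCpos : 0 < C := by
    apply Real.log_pos
    rw [lt_div_iff₀ h1ε]; linarith
  -- f is the secrecy rate
  set f : P → ℝ := fun L => α / (2 * hop L) * Real.logb 2 (C / (K₁ * W L)) with hf
  -- monotonicity lemma
  have mono : ∀ L ∈ F, ∀ M ∈ F, hop M ≤ hop L → W M ≤ W L → f L ≤ f M := by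
    intro L hL M hM hhopML hWML
    obtain ⟨hL𝓛, hLfeas⟩ := (hF L).1 hL
    obtain ⟨hM𝓛, hMfeas⟩ := (hF M).1 hM
    have hWL := hW L hL𝓛
    have hWM := hW M hM𝓛
    have hhopL := (hhop L hL𝓛).1
    have hhopM := (hhop M hM𝓛).1
    have hKL : 0 < K₁ * W L := mul_pos hK hWL
    have hKM : 0 < K₁ * W M := mul_pos hK hWM
    have harg1 : 1 ≤ C / (K₁ * W L) := by
      rw [le_div_iff₀ hKL]; linarith
    have hlogL : 0 ≤ Real.logb 2 (C / (K₁ * W L)) := by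
      apply Real.logb_nonneg one_lt_two harg1
    have hlogle : Real.logb 2 (C / (K₁ * W L)) ≤ Real.logb 2 (C / (K₁ * W M)) := by
      apply Real.logb_le_logb_of_le one_lt_two (by positivity)
      apply div_le_div_of_nonneg_left hCpos.le hKM
      exact mul_le_mul_of_nonneg_left hWML hK.le
    have hfac : α / (2 * hop L) ≤ α / (2 * hop M) := by
      apply div_le_div_of_nonneg_left hα.le
      · positivity
      · have : (hop M : ℝ) ≤ hop L := by exact_mod_cast hhopML
        linarith
    have hfacM : 0 ≤ α / (2 * hop M) := by positivity
    calc α / (2 * hop L) * Real.logb 2 (C / (K₁ * W L))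
        ≤ α / (2 * hop M) * Real.logb 2 (C / (K₁ * W L)) :=
          mul_le_mul_of_nonneg_right hfac hlogL
      _ ≤ α / (2 * hop M) * Real.logb 2 (C / (K₁ * W M)) :=
          mul_le_mul_of_nonneg_left hlogle hfacM
  -- the set of admissible hop budgets
  set S : Finset ℕ := (Finset.Icc 1 (N - 1)).filter (fun v => ∃ L ∈ F, hop L ≤ v) with hS
  have hSne : S.Nonempty := by
    obtain ⟨L₀, hL₀⟩ := hFne
    obtain ⟨hL₀𝓛, _⟩ := (hF L₀).1 hL₀
    refine ⟨hop L₀, ?_⟩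
    simp only [hS, Finset.mem_filter, Finset.mem_Icc]
    exact ⟨⟨(hhop L₀ hL₀𝓛).1, (hhop L₀ hL₀𝓛).2⟩, L₀, hL₀, le_refl _⟩
  obtain ⟨v, hvS, hvmax⟩ := S.exists_max_image (fun v => f (Lt v)) hSne
  simp only [hS, Finset.mem_filter] at hvS
  obtain ⟨hvIcc, hvex⟩ := hvS
  refine ⟨v, hvIcc, hvex, ?_, ?_⟩
  · intro L hL
    obtain ⟨hL𝓛, _⟩ := (hF L).1 hL
    have hexL : ∃ L' ∈ F, hop L' ≤ hop L := ⟨L, hL, le_refl _⟩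
    obtain ⟨hmemF, hmhop, hmin⟩ := hLt (hop L) hexL
    have h1 : f L ≤ f (Lt (hop L)) := mono L hL (Lt (hop L)) hmemF hmhop (hmin L hL (le_refl _))
    have hmemS : hop L ∈ S := by
      simp only [hS, Finset.mem_filter, Finset.mem_Icc]
      exact ⟨⟨(hhop L hL𝓛).1, (hhop L hL𝓛).2⟩, hexL⟩
    exact le_trans h1 (hvmax _ hmemS)
  · intro v' hv'Icc hv'ex
    have : v' ∈ S := by
      simp only [hS, Finset.mem_filter]; exact ⟨hv'Icc, hv'ex⟩
    exact hvmax _ this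
end
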